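/- arXiv:1405.3097 — 5 statements merged into one kernel-verified Lean document; each statement's English description precedes it below -/
import Mathlib

section
/- There exists a ±1 sequence of length 1160 with discrepancy at most 2; that is, there is a function x : {1,…,1160} → {−1,+1} such that for all positive integers d and k with k·d ≤ 1160 one has |∑_{i=1}^{k} x(i·d)| ≤ 2. -/
/-!
The witness is the sign sequence given by the binary digits of a single natural number (found by
a SAT solver). Its discrepancy bound is a finite computation checked by the kernel: for each
`d ≤ 1160`, one pass along `d, 2d, …` with a running sum bounds all partial sums at once.
-/

open Finset

/-- `checkPartialSums f C k s r` checks `|∑ i ∈ Icc 1 j, f i| ≤ C` for `k < j ≤ k + r`,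
where the accumulator `s` is meant to be `∑ i ∈ Icc 1 k, f i`. -/
def checkPartialSums (f : ℕ → ℤ) (C : ℤ) : ℕ → ℤ → ℕ → Bool
  | _, _, 0 => true
  | k, s, r + 1 =>
    -C ≤ s + f (k + 1) && s + f (k + 1) ≤ C && checkPartialSums f C (k + 1) (s + f (k + 1)) r

theorem abs_sum_Icc_le_of_checkPartialSums {f : ℕ → ℤ} {C : ℤ} (r : ℕ) :
    ∀ {k : ℕ} {s : ℤ}, s = ∑ i ∈ Icc 1 k, f i → checkPartialSums f C k s r = true →
      ∀ j, k < j → j ≤ k + r → |∑ i ∈ Icc 1 j, f i| ≤ C := by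
  induction r with
  | zero => intro k s _ _ j hkj hjk; omega
  | succ r ih =>
    intro k s hs hcheck j hkj hjk
    simp only [checkPartialSums, Bool.and_eq_true, decide_eq_true_eq] at hcheck
    obtain ⟨⟨hlow, hhigh⟩, hrest⟩ := hcheck
    have hs' : s + f (k + 1) = ∑ i ∈ Icc 1 (k + 1), f i := by
      rw [sum_Icc_succ_top (by omega), hs]
    rcases (show k + 1 = j ∨ k + 1 < j by omega) with rfl | hlt
    · rw [← hs']
      exact abs_le.mpr ⟨hlow, hhigh⟩
    · exact ih hs' hrest j hlt (by omega)

def discrepancyCheck (x : ℕ → ℤ) (N : ℕ) (C : ℤ) : Bool :=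
  (List.range' 1 N).all fun d => checkPartialSums (fun i => x (i * d)) C 0 0 (N / d)

theorem abs_sum_le_of_discrepancyCheck {x : ℕ → ℤ} {N : ℕ} {C : ℤ}
    (h : discrepancyCheck x N C = true) {d k : ℕ} (hd : 0 < d) (hk : 0 < k) (hkd : k * d ≤ N) :
    |∑ i ∈ Icc 1 k, x (i * d)| ≤ C := by
  have hdN : d ≤ N := le_trans (Nat.le_mul_of_pos_left d hk) hkd
  have hcheck : checkPartialSums (fun i => x (i * d)) C 0 0 (N / d) = true := by
    simp only [discrepancyCheck, List.all_eq_true, List.mem_range'_1] at h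
    exact h d ⟨hd, by omega⟩
  exact abs_sum_Icc_le_of_checkPartialSums (N / d) (by simp) hcheck k hk
    (by simpa using (Nat.le_div_iff_mul_le hd).mpr hkd)

/-- Position `i ≥ 1` reads bit `i - 1`. -/
def edpSequence (i : ℕ) : ℤ :=
  if Nat.testBit
    4504961097154825556269816741855888465623210343355151290943716603978351528177677941921575569145410064050348292847408667914112196206429627915851359507523008980453561767482806110725132488187895523446184796731734441618765218045202062586367838247296359929913629224050167431801393004487186973127093482254979913019648076100184780782545350812752650818736745
    (i - 1) then 1 else -1

theorem edpSequence_eq_one_or_neg_one (i : ℕ) : edpSequence i = 1 ∨ edpSequence i = -1 := by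
  unfold edpSequence
  split_ifs <;> simp

theorem discrepancyCheck_edpSequence : discrepancyCheck edpSequence 1160 2 = true := by
  decide +kernel

/-- There exists a ±1 sequence of length 1160 with discrepancy at most 2. -/
theorem edp_sat_1160 :
    ∃ x : ℕ → ℤ, (∀ i, 1 ≤ i → i ≤ 1160 → x i = 1 ∨ x i = -1) ∧
      ∀ d k : ℕ, 0 < d → 0 < k → k * d ≤ 1160 →
        |∑ i ∈ Finset.Icc 1 k, x (i * d)| ≤ 2 :=
  ⟨edpSequence, fun i _ _ => edpSequence_eq_one_or_neg_one i,
    fun _ _ hd hk hkd => abs_sum_le_of_discrepancyCheck discrepancyCheck_edpSequence hd hk hkd⟩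
end

section
/- There exists a unique completely multiplicative ±1 sequence of length 9 with discrepancy at most 1, namely (+1, −1, −1, +1, −1, +1, +1, −1, +1); that is, if x : {1,…,9} → {−1,+1} is completely multiplicative and |∑_{i=1}^{k} x(i·d)| ≤ 1 for all positive integers d, k with k·d ≤ 9, then x(1) = +1, x(2) = −1, x(3) = −1, x(4) = +1, x(5) = −1, x(6) = +1, x(7) = +1, x(8) = −1, x(9) = +1, and this sequence indeed has discrepancy at most 1. -/
/-!
Complete multiplicativity gives `x 1 = 1`, `x 4 = x 2 ^ 2` and so on. A sum of `2 k` signs is even,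
so discrepancy at most `1` forces every partial sum `x 1 + ⋯ + x (2 k)` to vanish, i.e.
`x (2 j + 1) = - x (2 j + 2)`. Running through `j = 0, 1, 2, 3` and using multiplicativity to
evaluate the even terms determines `x 2, x 3, x 5, x 7` in turn.
-/

open Finset

def IsSignSeq (n : ℕ) (x : ℕ → ℤ) : Prop :=
  ∀ i, 1 ≤ i → i ≤ n → x i = 1 ∨ x i = -1

def IsCompletelyMultiplicativeUpTo (n : ℕ) (x : ℕ → ℤ) : Prop :=
  ∀ m k : ℕ, 0 < m → 0 < k → m * k ≤ n → x (m * k) = x m * x k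

def DiscrepancyLE (n : ℕ) (x : ℕ → ℤ) (C : ℤ) : Prop :=
  ∀ d k : ℕ, 0 < d → 0 < k → k * d ≤ n → |∑ i ∈ Icc 1 k, x (i * d)| ≤ C

theorem sum_modEq_card_of_sign {α : Type*} {s : Finset α} {f : α → ℤ}
    (hf : ∀ i ∈ s, f i = 1 ∨ f i = -1) : ∑ i ∈ s, f i ≡ #s [ZMOD 2] := by
  have hodd : ∀ i ∈ s, f i ≡ 1 [ZMOD 2] := by
    intro i hi
    rcases hf i hi with h | h
    · rw [h]
    · rw [h]; decide
  simpa using Int.ModEq.sum hodd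

theorem eq_zero_of_even_of_abs_le_one {a : ℤ} (heven : Even a) (ha : |a| ≤ 1) : a = 0 := by
  obtain ⟨b, rfl⟩ := heven
  rw [abs_le] at ha
  omega

section SignSeq

variable {n : ℕ} {x : ℕ → ℤ}

theorem IsSignSeq.sum_Icc_two_mul_eq_zero (hx : IsSignSeq n x) (hdisc : DiscrepancyLE n x 1)
    {k : ℕ} (hk : 2 * k ≤ n) : ∑ i ∈ Icc 1 (2 * k), x i = 0 := by
  rcases Nat.eq_zero_or_pos k with rfl | hk0
  · simp
  have hsum := hdisc 1 (2 * k) one_pos (by omega) (by omega)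
  simp only [mul_one] at hsum
  refine eq_zero_of_even_of_abs_le_one ?_ hsum
  have hmod := sum_modEq_card_of_sign fun i hi ↦
    hx i (mem_Icc.mp hi).1 ((mem_Icc.mp hi).2.trans hk)
  rw [Nat.card_Icc, Nat.add_sub_cancel] at hmod
  exact Int.even_iff.mpr (hmod.eq.trans (by push_cast; omega))

theorem IsSignSeq.add_eq_zero (hx : IsSignSeq n x) (hdisc : DiscrepancyLE n x 1)
    {j : ℕ} (hj : 2 * j + 2 ≤ n) : x (2 * j + 1) + x (2 * j + 2) = 0 := by
  have hnext := hx.sum_Icc_two_mul_eq_zero hdisc (k := j + 1) (by omega)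
  rw [show 2 * (j + 1) = 2 * j + 1 + 1 by ring, sum_Icc_succ_top (by omega),
    sum_Icc_succ_top (by omega), hx.sum_Icc_two_mul_eq_zero hdisc (by omega)] at hnext
  linarith

theorem IsSignSeq.map_one (hx : IsSignSeq n x)
    (hmul : IsCompletelyMultiplicativeUpTo n x) (hn : 1 ≤ n) : x 1 = 1 := by
  have h := hmul 1 1 one_pos one_pos hn
  rcases hx 1 le_rfl hn with h1 | h1
  · exact h1
  · rw [h1] at h; norm_num at h

end SignSeq

/-- Agrees on `1, …, 9` with the completely multiplicative function sending `3` to `-1` and each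
prime `p ≠ 3` to the Legendre symbol `(p / 3)`. -/
def signSeq9 : ℕ → ℤ
  | 1 | 4 | 6 | 7 | 9 => 1
  | _ => -1

theorem isSignSeq_signSeq9 : IsSignSeq 9 signSeq9 := by
  intro i _ _
  unfold signSeq9
  split <;> simp

theorem isCompletelyMultiplicativeUpTo_signSeq9 : IsCompletelyMultiplicativeUpTo 9 signSeq9 := by
  intro m k hm hk hmk
  have : m ≤ 9 := by nlinarith
  have : k ≤ 9 := by nlinarith
  interval_cases m <;> interval_cases k <;> first | omega | decide

theorem discrepancyLE_signSeq9 : DiscrepancyLE 9 signSeq9 1 := by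
  intro d k hd hk hkd
  have : d ≤ 9 := by nlinarith
  have : k ≤ 9 := by nlinarith
  interval_cases d <;> interval_cases k <;> first | omega | decide

/-- There exists a unique completely multiplicative ±1 sequence of length 9
with discrepancy at most 1, namely (+1,−1,−1,+1,−1,+1,+1,−1,+1). -/
theorem cmult_unique_9 :
    (∀ x : ℕ → ℤ,
      (∀ i, 1 ≤ i → i ≤ 9 → x i = 1 ∨ x i = -1) →
      (∀ m k : ℕ, 0 < m → 0 < k → m * k ≤ 9 → x (m * k) = x m * x k) →
      (∀ d k : ℕ, 0 < d → 0 < k → k * d ≤ 9 →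
        |∑ i ∈ Finset.Icc 1 k, x (i * d)| ≤ 1) →
      (x 1 = 1 ∧ x 2 = -1 ∧ x 3 = -1 ∧ x 4 = 1 ∧ x 5 = -1 ∧
        x 6 = 1 ∧ x 7 = 1 ∧ x 8 = -1 ∧ x 9 = 1)) ∧
    (∃ x : ℕ → ℤ,
      (∀ i, 1 ≤ i → i ≤ 9 → x i = 1 ∨ x i = -1) ∧
      (∀ m k : ℕ, 0 < m → 0 < k → m * k ≤ 9 → x (m * k) = x m * x k) ∧
      (∀ d k : ℕ, 0 < d → 0 < k → k * d ≤ 9 →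
        |∑ i ∈ Finset.Icc 1 k, x (i * d)| ≤ 1) ∧
      x 1 = 1 ∧ x 2 = -1 ∧ x 3 = -1 ∧ x 4 = 1 ∧ x 5 = -1 ∧
        x 6 = 1 ∧ x 7 = 1 ∧ x 8 = -1 ∧ x 9 = 1) := by
  refine ⟨fun x hx hmul hdisc ↦ ?_, signSeq9, isSignSeq_signSeq9,
    isCompletelyMultiplicativeUpTo_signSeq9, discrepancyLE_signSeq9, by decide⟩
  have h1 : x 1 = 1 := IsSignSeq.map_one hx hmul (by norm_num)
  have hpair (j : ℕ) (hj : 2 * j + 2 ≤ 9) := IsSignSeq.add_eq_zero (x := x) hx hdisc hj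
  have h2 : x 2 = -1 := by linarith [hpair 0 (by norm_num)]
  have h4 : x 4 = 1 := by rw [hmul 2 2 two_pos two_pos (by norm_num), h2]; norm_num
  have h3 : x 3 = -1 := by linarith [hpair 1 (by norm_num)]
  have h6 : x 6 = 1 := by rw [hmul 2 3 two_pos three_pos (by norm_num), h2, h3]; norm_num
  have h5 : x 5 = -1 := by linarith [hpair 2 (by norm_num)]
  have h8 : x 8 = -1 := by rw [hmul 2 4 two_pos four_pos (by norm_num), h2, h4]; norm_num
  have h7 : x 7 = 1 := by linarith [hpair 3 (by norm_num)]
  have h9 : x 9 = 1 := by rw [hmul 3 3 three_pos three_pos (by norm_num), h3]; norm_num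
  exact ⟨h1, h2, h3, h4, h5, h6, h7, h8, h9⟩
end

section
/- A ±1 sequence x of length n is completely multiplicative if, and only if, x(1) = +1 and for every composite m ≤ n there exist non-trivial divisors i and j of m (i.e., 1 < i < m, 1 < j < m) with i·j = m such that x(m) = x(i)·x(j). -/
/-!
If `x` is completely multiplicative, then `x 1 = x 1 * x 1` forces `x 1 = 1` because
`x 1 = ±1` is a unit, and any factorisation of a composite number is a valid splitting.
Conversely, strong induction along the splittings shows `x m = ∏ x p` over the prime factors
of `m` (with multiplicity), and the multiset of prime factors of `m * k` is the union of those
of `m` and `k`.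
-/

theorem Nat.exists_mul_eq_of_not_prime {m : ℕ} (hm : 1 < m) (hp : ¬ m.Prime) :
    ∃ i j, 1 < i ∧ i < m ∧ 1 < j ∧ j < m ∧ i * j = m := by
  obtain ⟨i, j, him, hjm, hij⟩ := (Nat.not_prime_iff_exists_mul_eq hm).1 hp
  refine ⟨i, j, ?_, him, ?_, hjm, hij⟩
  · by_contra! hi
    interval_cases i <;> omega
  · by_contra! hj
    interval_cases j <;> omega

section PrimeFactorsList

variable {M : Type*} [CommMonoid M] (x : ℕ → M) (n : ℕ)

theorem prod_map_primeFactorsList_mul {m k : ℕ} (hm : m ≠ 0) (hk : k ≠ 0) :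
    ((m * k).primeFactorsList.map x).prod =
      (m.primeFactorsList.map x).prod * (k.primeFactorsList.map x).prod := by
  rw [((Nat.perm_primeFactorsList_mul hm hk).map x).prod_eq, List.map_append, List.prod_append]

theorem apply_eq_prod_map_primeFactorsList (h1 : x 1 = 1)
    (hsplit : ∀ m ≤ n, 1 < m → ¬ m.Prime →
      ∃ i j, i < m ∧ j < m ∧ i * j = m ∧ x m = x i * x j) :
    ∀ m, 0 < m → m ≤ n → x m = (m.primeFactorsList.map x).prod := by
  intro m
  induction m using Nat.strong_induction_on with
  | _ m ih =>
    intro hm hmn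
    obtain rfl | hm1 := (Nat.one_le_iff_ne_zero.2 hm.ne').eq_or_lt
    · simpa using h1
    by_cases hp : m.Prime
    · simp [Nat.primeFactorsList_prime hp]
    obtain ⟨i, j, him, hjm, rfl, hxm⟩ := hsplit m hmn hm1 hp
    have hi : i ≠ 0 := by rintro rfl; omega
    have hj : j ≠ 0 := by rintro rfl; omega
    rw [hxm, ih i him (by omega) (by omega), ih j hjm (by omega) (by omega),
      prod_map_primeFactorsList_mul x hi hj]

theorem apply_mul_of_apply_eq_prod_map_primeFactorsList
    (h : ∀ m, 0 < m → m ≤ n → x m = (m.primeFactorsList.map x).prod) :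
    ∀ m k, 0 < m → 0 < k → m * k ≤ n → x (m * k) = x m * x k := by
  intro m k hm hk hmk
  rw [h _ (Nat.mul_pos hm hk) hmk, h m hm (le_of_mul_le_of_one_le_left hmk hk),
    h k hk (le_of_mul_le_of_one_le_right hmk hm), prod_map_primeFactorsList_mul x hm.ne' hk.ne']

end PrimeFactorsList

/-- A ±1 sequence of length n is completely multiplicative iff x(1) = +1 and
every composite m ≤ n satisfies x(m) = x(i)·x(j) for some non-trivial
divisors i, j of m with i·j = m. -/
theorem cmult_characterisation (n : ℕ) (hn : 1 ≤ n) (x : ℕ → ℤ)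
    (hx : ∀ i, 1 ≤ i → i ≤ n → x i = 1 ∨ x i = -1) :
    (∀ m k : ℕ, 0 < m → 0 < k → m * k ≤ n → x (m * k) = x m * x k) ↔
    (x 1 = 1 ∧ ∀ m : ℕ, m ≤ n → 1 < m → ¬ m.Prime →
      ∃ i j : ℕ, 1 < i ∧ i < m ∧ 1 < j ∧ j < m ∧ i * j = m ∧
        x m = x i * x j) := by
  constructor
  · intro hmul
    refine ⟨?_, fun m hmn hm hp => ?_⟩
    · have hunit : IsUnit (x 1) := Int.isUnit_iff.2 (hx 1 le_rfl hn)
      exact hunit.mul_eq_left.1 (hmul 1 1 one_pos one_pos hn).symm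
    · obtain ⟨i, j, hi, him, hj, hjm, rfl⟩ := Nat.exists_mul_eq_of_not_prime hm hp
      exact ⟨i, j, hi, him, hj, hjm, rfl, hmul i j (by omega) (by omega) hmn⟩
  · rintro ⟨h1, hsplit⟩
    refine apply_mul_of_apply_eq_prod_map_primeFactorsList x n
      (apply_eq_prod_map_primeFactorsList x n h1 fun m hmn hm hp => ?_)
    obtain ⟨i, j, -, him, -, hjm, hij, hxm⟩ := hsplit m hmn hm hp
    exact ⟨i, j, him, hjm, hij, hxm⟩
end

section
/- Correctness of the sequential counter (Sinz) encoding. Fix n ≥ 1 and a : {1,…,n} → Bool, and suppose s : {0,…,n} × {0,…,n} → Bool satisfies: (1) for all 1 ≤ k ≤ n and 1 ≤ j ≤ n, s(k,j) = true if and only if s(k,j−1) = true or (s(k−1,j−1) = true and a(j) = true); (2) s(k,j) = false for all 0 ≤ j < k ≤ n; (3) s(0,j) = true for all 0 ≤ j ≤ n. Then: (i) for all 1 ≤ j ≤ n and 1 ≤ k ≤ n, s(k,j) = true if and only if the number of indices i with 1 ≤ i ≤ j and a(i) = true is at least k; moreover (ii) for every a : {1,…,n} → Bool such an s exists, and it satisfies: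 for all r ≤ n and j ≤ n, if the number of indices i ≤ j with a(i) = true is at most r, then s(k,j) = false for all r < k ≤ n. -/
/-!
Row `k` of a sequential counter is the indicator of "at least `k` of the first `j` inputs are
true": the recurrence (1) is exactly how `k ≤ partialCount a j` evolves when `j` grows by one,
and (2), (3) pin down the column `j = 0`. Induction on `j` gives (i); the threshold indicator
itself witnesses (ii), and it is false above any bound on the count.
-/

def partialCount (a : ℕ → Bool) (j : ℕ) : ℕ :=
  ((Finset.Icc 1 j).filter fun i => a i = true).card

lemma partialCount_zero (a : ℕ → Bool) : partialCount a 0 = 0 := by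
  simp [partialCount]

lemma partialCount_succ (a : ℕ → Bool) (j : ℕ) :
    partialCount a (j + 1) = partialCount a j + (a (j + 1)).toNat := by
  unfold partialCount
  rw [← Finset.insert_Icc_right_eq_Icc_add_one (by omega), Finset.filter_insert]
  cases a (j + 1) <;> simp [Finset.card_insert_of_notMem]

lemma partialCount_le (a : ℕ → Bool) (j : ℕ) : partialCount a j ≤ j :=
  (Finset.card_filter_le _ _).trans (by simp)

lemma le_partialCount_succ_iff (a : ℕ → Bool) (j k : ℕ) :
    k ≤ partialCount a (j + 1) ↔
      k ≤ partialCount a j ∨ (k - 1 ≤ partialCount a j ∧ a (j + 1) = true) := by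
  rw [partialCount_succ]
  cases a (j + 1) <;> simp; omega

structure IsSequentialCounter (n : ℕ) (a : ℕ → Bool) (s : ℕ → ℕ → Bool) : Prop where
  step : ∀ k j, 1 ≤ k → k ≤ n → 1 ≤ j → j ≤ n →
    (s k j = true ↔ (s k (j - 1) = true ∨ (s (k - 1) (j - 1) = true ∧ a j = true)))
  below_diag : ∀ k j, j < k → k ≤ n → s k j = false
  row_zero : ∀ j, j ≤ n → s 0 j = true

namespace IsSequentialCounter

variable {n : ℕ} {a : ℕ → Bool} {s : ℕ → ℕ → Bool}

theorem eq_true_iff (hs : IsSequentialCounter n a s) {j k : ℕ} (hj : j ≤ n) (hk : k ≤ n) :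
    s k j = true ↔ k ≤ partialCount a j := by
  induction j generalizing k with
  | zero =>
    rcases Nat.eq_zero_or_pos k with rfl | hk₀
    · simp [hs.row_zero 0 hj]
    · simp [hs.below_diag k 0 hk₀ hk, partialCount_zero]
      omega
  | succ j ih =>
    rcases Nat.eq_zero_or_pos k with rfl | hk₀
    · simp [hs.row_zero (j + 1) hj]
    · rw [hs.step k (j + 1) hk₀ hk (by omega) hj, Nat.add_sub_cancel,
        ih (by omega) hk, ih (by omega) (by omega), le_partialCount_succ_iff a j k]

end IsSequentialCounter

theorem isSequentialCounter_threshold (n : ℕ) (a : ℕ → Bool) :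
    IsSequentialCounter n a fun k j => decide (k ≤ partialCount a j) where
  step k j _ _ hj₀ _ := by
    obtain ⟨j, rfl⟩ : ∃ m, j = m + 1 := ⟨j - 1, by omega⟩
    simpa using le_partialCount_succ_iff a j k
  below_diag k j hjk _ := by
    have := partialCount_le a j
    simp only [decide_eq_false_iff_not]
    omega
  row_zero j _ := by simp

theorem sinz_counter_correct_general (n : ℕ) (a : ℕ → Bool) :
    (∀ s : ℕ → ℕ → Bool,
      (∀ k j, 1 ≤ k → k ≤ n → 1 ≤ j → j ≤ n →
        (s k j = true ↔
          (s k (j - 1) = true ∨ (s (k - 1) (j - 1) = true ∧ a j = true)))) →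
      (∀ k j, j < k → k ≤ n → s k j = false) →
      (∀ j, j ≤ n → s 0 j = true) →
      ∀ j k, 1 ≤ j → j ≤ n → 1 ≤ k → k ≤ n →
        (s k j = true ↔
          k ≤ ((Finset.Icc 1 j).filter fun i => a i = true).card)) ∧
    (∃ s : ℕ → ℕ → Bool,
      (∀ k j, 1 ≤ k → k ≤ n → 1 ≤ j → j ≤ n →
        (s k j = true ↔
          (s k (j - 1) = true ∨ (s (k - 1) (j - 1) = true ∧ a j = true)))) ∧
      (∀ k j, j < k → k ≤ n → s k j = false) ∧
      (∀ j, j ≤ n → s 0 j = true) ∧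
      (∀ r j, r ≤ n → j ≤ n →
        ((Finset.Icc 1 j).filter fun i => a i = true).card ≤ r →
        ∀ k, r < k → k ≤ n → s k j = false)) := by
  refine ⟨fun s step below_diag row_zero j k _ hj _ hk =>
    (IsSequentialCounter.mk step below_diag row_zero).eq_true_iff hj hk, ?_⟩
  obtain ⟨step, below_diag, row_zero⟩ := isSequentialCounter_threshold n a
  refine ⟨_, step, below_diag, row_zero, fun r j _ _ hcount k hrk _ => ?_⟩
  have : ¬ k ≤ partialCount a j := by unfold partialCount; omega
  simpa using this

/-- Correctness of the sequential counter (Sinz) encoding: (i) any s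
satisfying the sequential counter conditions (1)–(3) computes the partial
counts of a; (ii) such an s always exists, and it assigns false to all
counters exceeding any valid bound r on the partial count. -/
theorem sinz_counter_correct (n : ℕ) (hn : 1 ≤ n) (a : ℕ → Bool) :
    (∀ s : ℕ → ℕ → Bool,
      (∀ k j, 1 ≤ k → k ≤ n → 1 ≤ j → j ≤ n →
        (s k j = true ↔
          (s k (j - 1) = true ∨ (s (k - 1) (j - 1) = true ∧ a j = true)))) →
      (∀ k j, j < k → k ≤ n → s k j = false) →
      (∀ j, j ≤ n → s 0 j = true) →
      ∀ j k, 1 ≤ j → j ≤ n → 1 ≤ k → k ≤ n →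
        (s k j = true ↔
          k ≤ ((Finset.Icc 1 j).filter fun i => a i = true).card)) ∧
    (∃ s : ℕ → ℕ → Bool,
      (∀ k j, 1 ≤ k → k ≤ n → 1 ≤ j → j ≤ n →
        (s k j = true ↔
          (s k (j - 1) = true ∨ (s (k - 1) (j - 1) = true ∧ a j = true)))) ∧
      (∀ k j, j < k → k ≤ n → s k j = false) ∧
      (∀ j, j ≤ n → s 0 j = true) ∧
      (∀ r j, r ≤ n → j ≤ n →
        ((Finset.Icc 1 j).filter fun i => a i = true).card ≤ r →
        ∀ k, r < k → k ≤ n → s k j = false)) :=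
  sinz_counter_correct_general n a
end

section
/- Correctness of the C-bounded encoding. Fix n ≥ 1, an integer C > 0, and a : {1,…,n} → Bool, and let x : {1,…,n} → {−1,+1} be defined by x(i) = +1 if a(i) = true and x(i) = −1 otherwise. Then x is C-bounded (i.e., |∑_{i=1}^{j} x(i)| ≤ C for all 1 ≤ j ≤ n) if, and only if, there exists s : {0,…,n} × {0,…,n} → Bool satisfying: (1) for all 1 ≤ k ≤ n and 1 ≤ j ≤ n, s(k,j) = true if and only if s(k,j−1) = true or (s(k−1,j−1) = true and a(j) = true); (2) s(k,j) = false for all 0 ≤ j < k ≤ n; (3) s(0,j) = true for all 0 ≤ j ≤ n; (4) s(k,j) = true for all 1 ≤ k ≤ n and all j with 2k−2+C < j ≤ n; (5) s(k,j) = false for all 1 ≤ k ≤ n and all j with 0 ≤ j < 2k−C. -/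
/-!
Let `c j` be the number of `true`s among `a 1, …, a j`. Conditions (1)–(3) determine a
counter uniquely on `{0,…,n}²`, and the unique one is `s k j ↔ k ≤ c j`: by (3) and (2) this
holds at `k = 0` and at `j = 0`, and (1) propagates it along `j` exactly as `c` grows. The
partial sums of `x` are `2 c j - j`, and under `s k j ↔ k ≤ c j` clause (4) is the lower bound
`j - C ≤ 2 c j` and clause (5) the upper bound `2 c j ≤ j + C` (test them at `k = c j + 1` and
at `k = c j`).
-/

def trueCount (a : ℕ → Bool) : ℕ → ℕ
  | 0 => 0
  | j + 1 => trueCount a j + (a (j + 1)).toNat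

lemma trueCount_le (a : ℕ → Bool) (j : ℕ) : trueCount a j ≤ j := by
  induction j with
  | zero => rfl
  | succ j ih =>
    have := Bool.toNat_le (a (j + 1))
    simp only [trueCount]
    omega

lemma le_trueCount_succ_iff (a : ℕ → Bool) (k j : ℕ) :
    k ≤ trueCount a (j + 1) ↔
      k ≤ trueCount a j ∨ (k - 1 ≤ trueCount a j ∧ a (j + 1) = true) := by
  cases h : a (j + 1) <;> simp [trueCount, h]
  omega

lemma sum_sign_eq (a : ℕ → Bool) (j : ℕ) :
    ∑ i ∈ Finset.Icc 1 j, (if a i then (1 : ℤ) else -1) = 2 * (trueCount a j : ℤ) - j := by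
  induction j with
  | zero => simp [trueCount]
  | succ j ih =>
    rw [Finset.sum_Icc_succ_top (by omega), ih]
    cases h : a (j + 1) <;>
      simp only [trueCount, h, Bool.toNat_true, Bool.toNat_false] <;> push_cast <;> ring

def IsSequentialCounter_s19 (n : ℕ) (a : ℕ → Bool) (s : ℕ → ℕ → Bool) : Prop :=
  (∀ k j, 1 ≤ k → k ≤ n → 1 ≤ j → j ≤ n →
    (s k j = true ↔ (s k (j - 1) = true ∨ (s (k - 1) (j - 1) = true ∧ a j = true)))) ∧
  (∀ k j, j < k → k ≤ n → s k j = false) ∧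
  (∀ j, j ≤ n → s 0 j = true)

lemma isSequentialCounter_le_trueCount (n : ℕ) (a : ℕ → Bool) :
    IsSequentialCounter_s19 n a fun k j => decide (k ≤ trueCount a j) := by
  refine ⟨fun k j _ _ hj _ => ?_, fun k j hjk _ => ?_, fun j _ => by simp⟩
  · obtain ⟨j, rfl⟩ : ∃ i, j = i + 1 := ⟨j - 1, by omega⟩
    simpa only [decide_eq_true_eq, Nat.add_sub_cancel] using le_trueCount_succ_iff a k j
  · have := trueCount_le a j
    simp only [decide_eq_false_iff_not]
    omega

lemma IsSequentialCounter_s19.eq_true_iff {n : ℕ} {a : ℕ → Bool} {s : ℕ → ℕ → Bool}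
    (hs : IsSequentialCounter_s19 n a s) {j : ℕ} (hjn : j ≤ n) {k : ℕ} (hkn : k ≤ n) :
    s k j = true ↔ k ≤ trueCount a j := by
  obtain ⟨hstep, hbelow, hzero⟩ := hs
  induction j generalizing k with
  | zero =>
    rcases Nat.eq_zero_or_pos k with rfl | hk
    · simp [hzero 0 hjn]
    · simp [hbelow k 0 hk hkn, trueCount]
      omega
  | succ j ih =>
    rcases Nat.eq_zero_or_pos k with rfl | hk
    · simp [hzero (j + 1) hjn]
    · rw [hstep k (j + 1) hk hkn (by omega) hjn, Nat.add_sub_cancel, ih (by omega) hkn,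
        ih (by omega) (by omega), le_trueCount_succ_iff a k j]

section Clauses

variable {n : ℕ} {C : ℤ} {c : ℕ → ℕ}

lemma lower_clause_iff (hC : 0 < C) (hc : ∀ j, c j ≤ j) :
    (∀ k j : ℕ, 1 ≤ k → k ≤ n → 2 * (k : ℤ) - 2 + C < (j : ℤ) → j ≤ n → k ≤ c j) ↔
      ∀ j, 1 ≤ j → j ≤ n → -C ≤ 2 * (c j : ℤ) - j := by
  constructor
  · intro h j _ hjn
    by_contra! hlow
    have := h (c j + 1) j (by omega) (by have := hc j; omega) (by push_cast; omega) hjn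
    omega
  · intro h k j hk _ hlt hjn
    have := h j (by omega) hjn
    omega

lemma upper_clause_iff (hC : 0 < C) (hc : ∀ j, c j ≤ j) :
    (∀ k j : ℕ, 1 ≤ k → k ≤ n → (j : ℤ) < 2 * (k : ℤ) - C → j ≤ n → c j < k) ↔
      ∀ j, 1 ≤ j → j ≤ n → 2 * (c j : ℤ) - j ≤ C := by
  constructor
  · intro h j _ hjn
    by_contra! hup
    have := h (c j) j (by omega) (by have := hc j; omega) (by omega) hjn
    omega
  · intro h k j hk _ hlt hjn
    rcases Nat.eq_zero_or_pos j with rfl | hj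
    · have := hc 0
      omega
    · have := h j hj hjn
      omega

end Clauses

theorem cbounded_encoding_correct_general (n : ℕ) (C : ℤ) (hC : 0 < C)
    (a : ℕ → Bool) :
    (∀ j, 1 ≤ j → j ≤ n →
        |∑ i ∈ Finset.Icc 1 j, (if a i then (1 : ℤ) else -1)| ≤ C) ↔
    (∃ s : ℕ → ℕ → Bool,
      (∀ k j, 1 ≤ k → k ≤ n → 1 ≤ j → j ≤ n →
        (s k j = true ↔
          (s k (j - 1) = true ∨ (s (k - 1) (j - 1) = true ∧ a j = true)))) ∧
      (∀ k j, j < k → k ≤ n → s k j = false) ∧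
      (∀ j, j ≤ n → s 0 j = true) ∧
      (∀ k j : ℕ, 1 ≤ k → k ≤ n → 2 * (k : ℤ) - 2 + C < (j : ℤ) → j ≤ n →
        s k j = true) ∧
      (∀ k j : ℕ, 1 ≤ k → k ≤ n → (j : ℤ) < 2 * (k : ℤ) - C → j ≤ n →
        s k j = false)) := by
  simp only [sum_sign_eq, abs_le, imp_and, forall_and]
  rw [← lower_clause_iff hC (trueCount_le a), ← upper_clause_iff hC (trueCount_le a)]
  constructor
  · rintro ⟨hlower, hupper⟩
    obtain ⟨hstep, hbelow, hzero⟩ := isSequentialCounter_le_trueCount n a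
    refine ⟨_, hstep, hbelow, hzero, fun k j hk hkn hlt hjn => ?_, fun k j hk hkn hlt hjn => ?_⟩
    · exact decide_eq_true (hlower k j hk hkn hlt hjn)
    · exact decide_eq_false (Nat.not_le.mpr (hupper k j hk hkn hlt hjn))
  · rintro ⟨s, hstep, hbelow, hzero, htrue, hfalse⟩
    have hs : IsSequentialCounter_s19 n a s := ⟨hstep, hbelow, hzero⟩
    refine ⟨fun k j hk hkn hlt hjn => ?_, fun k j hk hkn hlt hjn => ?_⟩
    · exact (hs.eq_true_iff hjn hkn).1 (htrue k j hk hkn hlt hjn)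
    · rw [← Nat.not_le, ← hs.eq_true_iff hjn hkn, hfalse k j hk hkn hlt hjn]
      simp

/-- Correctness of the C-bounded encoding: the ±1 sequence induced by the
Boolean sequence a is C-bounded iff there is a sequential counter s
satisfying conditions (1)–(3) together with the C-boundedness clauses
(4)–(5). -/
theorem cbounded_encoding_correct (n : ℕ) (hn : 1 ≤ n) (C : ℤ) (hC : 0 < C)
    (a : ℕ → Bool) :
    (∀ j, 1 ≤ j → j ≤ n →
        |∑ i ∈ Finset.Icc 1 j, (if a i then (1 : ℤ) else -1)| ≤ C) ↔
    (∃ s : ℕ → ℕ → Bool,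
      (∀ k j, 1 ≤ k → k ≤ n → 1 ≤ j → j ≤ n →
        (s k j = true ↔
          (s k (j - 1) = true ∨ (s (k - 1) (j - 1) = true ∧ a j = true)))) ∧
      (∀ k j, j < k → k ≤ n → s k j = false) ∧
      (∀ j, j ≤ n → s 0 j = true) ∧
      (∀ k j : ℕ, 1 ≤ k → k ≤ n → 2 * (k : ℤ) - 2 + C < (j : ℤ) → j ≤ n →
        s k j = true) ∧
      (∀ k j : ℕ, 1 ≤ k → k ≤ n → (j : ℤ) < 2 * (k : ℤ) - C → j ≤ n →
        s k j = false)) :=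
  cbounded_encoding_correct_general n C hC a
end
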